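/- Every CAT(0) space has Enflo type 2 with constant 1: for every N ∈ ℕ and every family (x_ε) ⊂ X indexed by ε ∈ {−1,1}^N, Σ_ε d(x_ε, x_{−ε})² ≤ Σ_{ε∼ε'} d(x_ε, x_{ε'})², where ε ∼ ε' means the indices differ in exactly one coordinate. -/

import Mathlib

open Finset

/-- A unit-interval parametrized minimal (constant-speed, length-minimizing)
geodesic from `y` to `z`. -/
def IsMinGeodesic {X : Type*} [MetricSpace X] (γ : ℝ → X) (y z : X) : Prop :=
  γ 0 = y ∧ γ 1 = z ∧
    ∀ s ∈ Set.Icc (0:ℝ) 1, ∀ t ∈ Set.Icc (0:ℝ) 1,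
      dist (γ s) (γ t) = |s - t| * dist y z

/-- Two vertices of the discrete cube `{−1,1}^N` (modelled as `Fin N → Bool`) are adjacent
if they differ in exactly one coordinate. -/
def Adjacent {N : ℕ} (ε ε' : Fin N → Bool) : Prop :=
  (Finset.univ.filter fun i => ε i ≠ ε' i).card = 1

instance {N : ℕ} (ε ε' : Fin N → Bool) : Decidable (Adjacent ε ε') := by
  unfold Adjacent; infer_instance

/-!
A CAT(0) space satisfies the quadrilateral inequality
`d(a,c)² + d(b,d)² ≤ d(a,b)² + d(b,c)² + d(c,d)² + d(d,a)²`: if `m` is the midpoint of `b` and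
`d`, then `d(a,c)² ≤ 2 d(a,m)² + 2 d(c,m)²`, and the midpoint comparison inequality bounds
both terms. Enflo's argument then gives the cube inequality by induction on `N`: split the cube
into the faces `ε₀ = false` and `ε₀ = true`, apply the quadrilateral inequality to the
quadrilaterals `(false, δ), (true, δ), (true, -δ), (false, -δ)`, and the induction hypothesis to
the diagonals of the two faces.
-/

namespace BoolCube

variable {N : ℕ}

def antipode (ε : Fin N → Bool) : Fin N → Bool := fun i => !ε i

def flipAt (ε : Fin N → Bool) (i : Fin N) : Fin N → Bool := Function.update ε i (!ε i)

theorem antipode_involutive : Function.Involutive (antipode (N := N)) :=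
  fun ε => funext fun i => Bool.not_not (ε i)

theorem sum_antipode {M : Type*} [AddCommMonoid M] (f : (Fin N → Bool) → M) :
    ∑ ε, f (antipode ε) = ∑ ε, f ε :=
  Equiv.sum_comp antipode_involutive.toPerm f

theorem antipode_cons (b : Bool) (δ : Fin N → Bool) :
    antipode (Fin.cons b δ : Fin (N + 1) → Bool) = Fin.cons (!b) (antipode δ) :=
  Fin.comp_cons not b δ

theorem flipAt_cons_zero (b : Bool) (δ : Fin N → Bool) :
    flipAt (Fin.cons b δ : Fin (N + 1) → Bool) 0 = Fin.cons (!b) δ :=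
  Fin.update_cons_zero _ _ _

theorem flipAt_cons_succ (b : Bool) (δ : Fin N → Bool) (i : Fin N) :
    flipAt (Fin.cons b δ : Fin (N + 1) → Bool) i.succ = Fin.cons b (flipAt δ i) :=
  (Fin.cons_update _ _ _ _).symm

theorem flipAt_injective (ε : Fin N → Bool) : Function.Injective (flipAt ε) := by
  intro i j hij
  by_contra hne
  have := congrFun hij i
  rw [flipAt, flipAt, Function.update_self, Function.update_of_ne hne] at this
  exact Bool.not_ne_self (ε i) this

theorem adjacent_iff {ε ε' : Fin N → Bool} : Adjacent ε ε' ↔ ∃ i, flipAt ε i = ε' := by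
  simp only [Adjacent, Finset.card_eq_one, Finset.ext_iff, Finset.mem_filter, Finset.mem_univ,
    true_and, Finset.mem_singleton, flipAt, funext_iff, Function.update_apply]
  refine exists_congr fun i => forall_congr' fun j => ?_
  by_cases h : j = i
  · subst h; cases ε j <;> cases ε' j <;> simp
  · cases ε j <;> cases ε' j <;> simp [h]

theorem sum_ite_adjacent {M : Type*} [AddCommMonoid M] (ε : Fin N → Bool)
    (f : (Fin N → Bool) → M) :
    ∑ ε', (if Adjacent ε ε' then f ε' else 0) = ∑ i, f (flipAt ε i) := by
  have : univ.filter (Adjacent ε) = univ.image (flipAt ε) := by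
    ext ε'; simp [adjacent_iff]
  rw [← Finset.sum_filter, this, Finset.sum_image (flipAt_injective ε).injOn]

theorem sum_cube_succ {M : Type*} [AddCommMonoid M] (f : (Fin (N + 1) → Bool) → M) :
    ∑ ε, f ε = ∑ δ, (f (Fin.cons false δ) + f (Fin.cons true δ)) := by
  rw [← Equiv.sum_comp (Fin.consEquiv fun _ => Bool) f, Fintype.sum_prod_type, Fintype.sum_bool,
    ← Finset.sum_add_distrib]
  exact Finset.sum_congr rfl fun δ _ => add_comm _ _

end BoolCube

open BoolCube

section EnfloType

variable {X : Type*} [PseudoMetricSpace X] {N : ℕ}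

def diagonalSum (x : (Fin N → Bool) → X) : ℝ :=
  ∑ ε, dist (x ε) (x (antipode ε)) ^ 2

def edgeSum (x : (Fin N → Bool) → X) : ℝ :=
  ∑ ε, ∑ i, dist (x ε) (x (flipAt ε i)) ^ 2

theorem diagonalSum_succ (x : (Fin (N + 1) → Bool) → X) :
    diagonalSum x = ∑ δ, (dist (x (Fin.cons false δ)) (x (Fin.cons true (antipode δ))) ^ 2 +
      dist (x (Fin.cons true δ)) (x (Fin.cons false (antipode δ))) ^ 2) := by
  simp only [diagonalSum, sum_cube_succ, antipode_cons, Bool.not_false, Bool.not_true]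

theorem edgeSum_succ (x : (Fin (N + 1) → Bool) → X) :
    edgeSum x = ∑ δ, (dist (x (Fin.cons false δ)) (x (Fin.cons true δ)) ^ 2 +
        dist (x (Fin.cons true δ)) (x (Fin.cons false δ)) ^ 2) +
      edgeSum (fun δ => x (Fin.cons false δ)) + edgeSum (fun δ => x (Fin.cons true δ)) := by
  simp only [edgeSum, sum_cube_succ, Fin.sum_univ_succ, flipAt_cons_zero, flipAt_cons_succ,
    Bool.not_false, Bool.not_true, Finset.sum_add_distrib]
  ring

theorem diagonalSum_le_edgeSum
    (hquad : ∀ a b c d : X, dist a c ^ 2 + dist b d ^ 2 ≤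
      dist a b ^ 2 + dist b c ^ 2 + dist c d ^ 2 + dist d a ^ 2)
    (x : (Fin N → Bool) → X) : diagonalSum x ≤ edgeSum x := by
  induction N with
  | zero =>
    have : ∀ ε : Fin 0 → Bool, antipode ε = ε := fun _ => Subsingleton.elim _ _
    simp [diagonalSum, edgeSum, this]
  | succ N ih =>
    set x₀ : (Fin N → Bool) → X := fun δ => x (Fin.cons false δ)
    set x₁ : (Fin N → Bool) → X := fun δ => x (Fin.cons true δ)
    calc diagonalSum x
        = ∑ δ, (dist (x₀ δ) (x₁ (antipode δ)) ^ 2 + dist (x₁ δ) (x₀ (antipode δ)) ^ 2) :=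
          diagonalSum_succ x
      _ ≤ ∑ δ, (dist (x₀ δ) (x₁ δ) ^ 2 + dist (x₁ δ) (x₁ (antipode δ)) ^ 2 +
            dist (x₁ (antipode δ)) (x₀ (antipode δ)) ^ 2 +
            dist (x₀ (antipode δ)) (x₀ δ) ^ 2) :=
          Finset.sum_le_sum fun δ _ => hquad _ _ _ _
      _ = ∑ δ, (dist (x₀ δ) (x₁ δ) ^ 2 + dist (x₁ δ) (x₀ δ) ^ 2) +
            diagonalSum x₀ + diagonalSum x₁ := by
          simp only [Finset.sum_add_distrib, diagonalSum,
            sum_antipode fun δ => dist (x₁ δ) (x₀ δ) ^ 2, dist_comm (x₀ (antipode _))]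
          ring
      _ ≤ ∑ δ, (dist (x₀ δ) (x₁ δ) ^ 2 + dist (x₁ δ) (x₀ δ) ^ 2) +
            edgeSum x₀ + edgeSum x₁ := by
          gcongr <;> exact ih _
      _ = edgeSum x := (edgeSum_succ x).symm

end EnfloType

theorem dist_sq_add_dist_sq_le_of_midpoint {X : Type*} [PseudoMetricSpace X] {a b c d m : X}
    (ha : dist a m ^ 2 ≤
      (1/2) * dist a b ^ 2 + (1/2) * dist a d ^ 2 - (1/4) * dist b d ^ 2)
    (hc : dist c m ^ 2 ≤
      (1/2) * dist c b ^ 2 + (1/2) * dist c d ^ 2 - (1/4) * dist b d ^ 2) :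
    dist a c ^ 2 + dist b d ^ 2 ≤
      dist a b ^ 2 + dist b c ^ 2 + dist c d ^ 2 + dist d a ^ 2 := by
  have htri : dist a c ^ 2 ≤ (dist a m + dist c m) ^ 2 := by
    rw [dist_comm c m]
    exact pow_le_pow_left₀ dist_nonneg (dist_triangle a m c) 2
  rw [dist_comm b c, dist_comm d a]
  nlinarith [sq_nonneg (dist a m - dist c m)]

/-- Every CAT(0) space (geodesic space with the nonpositive-curvature midpoint comparison
inequality) has Enflo type 2 with constant 1. -/
theorem stmt10 {X : Type*} [MetricSpace X]
    (hgeo : ∀ y z : X, ∃ γ : ℝ → X, IsMinGeodesic γ y z)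
    (hcat : ∀ (x y z : X) (γ : ℝ → X), IsMinGeodesic γ y z →
      dist x (γ (1/2)) ^ 2 ≤
        (1/2) * dist x y ^ 2 + (1/2) * dist x z ^ 2 - (1/4) * dist y z ^ 2)
    (N : ℕ) (x : (Fin N → Bool) → X) :
    ∑ ε : Fin N → Bool, dist (x ε) (x (fun i => !(ε i))) ^ 2 ≤
      ∑ ε : Fin N → Bool, ∑ ε' : Fin N → Bool,
        if Adjacent ε ε' then dist (x ε) (x ε') ^ 2 else 0 := by
  have hquad : ∀ a b c d : X, dist a c ^ 2 + dist b d ^ 2 ≤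
      dist a b ^ 2 + dist b c ^ 2 + dist c d ^ 2 + dist d a ^ 2 := fun a b c d => by
    obtain ⟨γ, hγ⟩ := hgeo b d
    exact dist_sq_add_dist_sq_le_of_midpoint (hcat a b d γ hγ) (hcat c b d γ hγ)
  calc ∑ ε, dist (x ε) (x (fun i => !(ε i))) ^ 2
      ≤ edgeSum x := diagonalSum_le_edgeSum hquad x
    _ = _ := Finset.sum_congr rfl fun ε _ =>
      (sum_ite_adjacent ε fun ε' => dist (x ε) (x ε') ^ 2).symm
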